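/- arXiv:2311.08384 — 3 statements merged into one kernel-verified Lean document; each statement's English description precedes it below -/
import Mathlib

section
/- Performance difference lemma: For any two policies π and π′ of a finite discounted MDP, V^π − V^{π′} = (1/(1−γ)) · E_{(s,a)∼d^π}[A^{π′}(s,a)]. -/
open Finset

structure FinMDP (S A : Type*) [Fintype S] [Fintype A] where
  P : S → A → S → ℝ
  P_nonneg : ∀ s a s', 0 ≤ P s a s'
  P_sum : ∀ s a, ∑ s', P s a s' = 1
  r : S → A → ℝ
  r_nonneg : ∀ s a, 0 ≤ r s a
  r_le_one : ∀ s a, r s a ≤ 1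
  disc : ℝ
  disc_pos : 0 < disc
  disc_lt_one : disc < 1
  init : S → ℝ
  init_nonneg : ∀ s, 0 ≤ init s
  init_sum : ∑ s, init s = 1

variable {S A : Type*} [Fintype S] [Fintype A] [Nonempty S] [Nonempty A]

/-- A policy assigns to each state a probability mass function over actions. -/
def IsPolicy (π : S → A → ℝ) : Prop :=
  (∀ s a, 0 ≤ π s a) ∧ ∀ s, ∑ a, π s a = 1

/-- The Bellman operator `T^π`. -/
noncomputable def FinMDP.bellman (M : FinMDP S A) (π f : S → A → ℝ) (s : S) (a : A) : ℝ :=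
  M.r s a + M.disc * ∑ s', M.P s a s' * ∑ a', π s' a' * f s' a'

/-- `Q` is the action-value function of `π`, i.e. satisfies the Bellman equation. -/
def FinMDP.IsQ (M : FinMDP S A) (π Q : S → A → ℝ) : Prop :=
  ∀ s a, Q s a = M.bellman π Q s a

/-- The state value `V^π(s)` induced by a `Q`-function. -/
noncomputable def vOf (π Q : S → A → ℝ) (s : S) : ℝ := ∑ a, π s a * Q s a

/-- The scalar value `V^π = E_{s ∼ μ₀}[V^π(s)]`. -/
noncomputable def FinMDP.scalarV (M : FinMDP S A) (π Q : S → A → ℝ) : ℝ :=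
  ∑ s, M.init s * vOf π Q s

/-- Distribution of the state at time `t` under policy `π`. -/
noncomputable def FinMDP.stateDist (M : FinMDP S A) (π : S → A → ℝ) : ℕ → S → ℝ
  | 0 => M.init
  | (t + 1) => fun s' => ∑ s, ∑ a, FinMDP.stateDist M π t s * π s a * M.P s a s'

/-- The discounted occupancy measure `d^π(s,a) = (1-γ) ∑_t γ^t Pr^π(s_t = s, a_t = a)`. -/
noncomputable def FinMDP.occ (M : FinMDP S A) (π : S → A → ℝ) (s : S) (a : A) : ℝ :=
  (1 - M.disc) * ∑' t : ℕ, M.disc ^ t * M.stateDist π t s * π s a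

/-!
The gap `g = V^π - V^{π'}` between state values satisfies the one-step identity
`g = w + γ P_π g`, where `w s = E_{a ∼ π(s)} [A^{π'}(s, a)]` and `P_π` is the state transition
matrix of `π`. Averaging it against the state distribution `μ_t` at time `t` gives the recursion
`f t = u t + γ f (t + 1)` for `f t = E_{μ_t} g` and `u t = E_{μ_t} w`. As `f` is bounded, unrolling
it gives `f 0 = ∑_t γ^t u t`, and this series is `(1 - γ)⁻¹` times the `d^π`-expectation of `A^{π'}`.
-/

open Filter Topology

section Telescoping

variable {γ B : ℝ} {f u : ℕ → ℝ}

theorem sum_range_pow_mul_of_eq_add_mul_succ (hrec : ∀ t, f t = u t + γ * f (t + 1)) (n : ℕ) :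
    ∑ t ∈ range n, γ ^ t * u t = f 0 - γ ^ n * f n := by
  induction n with
  | zero => simp
  | succ n ih => rw [sum_range_succ, ih, hrec n]; ring

theorem hasSum_pow_mul_of_eq_add_mul_succ (hγ0 : 0 ≤ γ) (hγ1 : γ < 1) (hf : ∀ t, |f t| ≤ B)
    (hrec : ∀ t, f t = u t + γ * f (t + 1)) :
    HasSum (fun t => γ ^ t * u t) (f 0) := by
  have hγf : ∀ t, |γ ^ t * f t| ≤ B * γ ^ t := fun t => by
    rw [abs_mul, abs_pow, abs_of_nonneg hγ0, mul_comm]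
    exact mul_le_mul_of_nonneg_right (hf t) (pow_nonneg hγ0 t)
  have hu : ∀ t, |u t| ≤ 2 * B := fun t => by
    have hγf1 : |γ * f (t + 1)| ≤ B := by
      rw [abs_mul, abs_of_nonneg hγ0]
      exact (mul_le_of_le_one_left (abs_nonneg _) hγ1.le).trans (hf (t + 1))
    calc |u t| = |f t - γ * f (t + 1)| := by rw [hrec t, add_sub_cancel_right]
      _ ≤ |f t| + |γ * f (t + 1)| := abs_sub _ _
      _ ≤ 2 * B := by linarith [hf t]
  have hsum : Summable fun t => γ ^ t * u t :=
    .of_norm_bounded ((summable_geometric_of_lt_one hγ0 hγ1).mul_left (2 * B)) fun t => by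
      rw [Real.norm_eq_abs, abs_mul, abs_pow, abs_of_nonneg hγ0, mul_comm]
      exact mul_le_mul_of_nonneg_right (hu t) (pow_nonneg hγ0 t)
  have htail : Tendsto (fun n => γ ^ n * f n) atTop (𝓝 0) :=
    squeeze_zero_norm hγf <| by
      simpa using (tendsto_pow_atTop_nhds_zero_of_lt_one hγ0 hγ1).const_mul B
  rw [hsum.hasSum_iff_tendsto_nat]
  simp_rw [sum_range_pow_mul_of_eq_add_mul_succ hrec]
  simpa using tendsto_const_nhds.sub htail

end Telescoping

namespace FinMDP

variable {S A : Type*} [Fintype S] [Fintype A] (M : FinMDP S A) {π π' Q Q' : S → A → ℝ}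

theorem stateDist_nonneg (hπ : IsPolicy π) (t : ℕ) (s : S) : 0 ≤ M.stateDist π t s := by
  induction t generalizing s with
  | zero => exact M.init_nonneg s
  | succ t ih =>
    exact sum_nonneg fun x _ => sum_nonneg fun a _ =>
      mul_nonneg (mul_nonneg (ih x) (hπ.1 x a)) (M.P_nonneg x a s)

theorem sum_stateDist_succ_mul (h : S → ℝ) (t : ℕ) :
    ∑ s', M.stateDist π (t + 1) s' * h s' =
      ∑ s, M.stateDist π t s * ∑ a, π s a * ∑ s', M.P s a s' * h s' := by
  simp only [stateDist, sum_mul, mul_sum]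
  rw [sum_comm]
  refine sum_congr rfl fun s _ => ?_
  rw [sum_comm]
  exact sum_congr rfl fun a _ => sum_congr rfl fun s' _ => by ring

theorem sum_stateDist (hπ : IsPolicy π) (t : ℕ) : ∑ s, M.stateDist π t s = 1 := by
  induction t with
  | zero => exact M.init_sum
  | succ t ih => simpa [M.P_sum, hπ.2, ih] using M.sum_stateDist_succ_mul (π := π) (fun _ => 1) t

theorem stateDist_le_one (hπ : IsPolicy π) (t : ℕ) (s : S) : M.stateDist π t s ≤ 1 :=
  (single_le_sum (fun s _ => M.stateDist_nonneg hπ t s) (mem_univ s)).trans_eq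
    (M.sum_stateDist hπ t)

theorem abs_sum_stateDist_mul_le (hπ : IsPolicy π) (h : S → ℝ) (t : ℕ) :
    |∑ s, M.stateDist π t s * h s| ≤ ∑ s, |h s| :=
  (abs_sum_le_sum_abs _ _).trans <| sum_le_sum fun s _ => by
    rw [abs_mul, abs_of_nonneg (M.stateDist_nonneg hπ t s)]
    exact mul_le_of_le_one_left (abs_nonneg _) (M.stateDist_le_one hπ t s)

theorem summable_disc_pow_mul_stateDist (hπ : IsPolicy π) (s : S) :
    Summable fun t => M.disc ^ t * M.stateDist π t s :=
  (summable_geometric_of_lt_one M.disc_pos.le M.disc_lt_one).of_nonneg_of_le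
    (fun t => mul_nonneg (pow_nonneg M.disc_pos.le t) (M.stateDist_nonneg hπ t s))
    (fun t => mul_le_of_le_one_right (pow_nonneg M.disc_pos.le t) (M.stateDist_le_one hπ t s))

theorem hasSum_occ (hπ : IsPolicy π) (s : S) (a : A) :
    HasSum (fun t => M.disc ^ t * M.stateDist π t s * π s a) (M.occ π s a / (1 - M.disc)) := by
  rw [occ, mul_div_cancel_left₀ _ (sub_pos.2 M.disc_lt_one).ne']
  exact ((M.summable_disc_pow_mul_stateDist hπ s).mul_right (π s a)).hasSum

theorem hasSum_disc_pow_mul_sum_stateDist (hπ : IsPolicy π) (c : S → A → ℝ) :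
    HasSum (fun t => M.disc ^ t * ∑ s, M.stateDist π t s * ∑ a, π s a * c s a)
      (1 / (1 - M.disc) * ∑ s, ∑ a, M.occ π s a * c s a) := by
  have h := hasSum_sum (s := univ) fun s _ =>
    hasSum_sum (s := univ) fun a _ => (M.hasSum_occ hπ s a).mul_right (c s a)
  simp only [div_eq_inv_mul] at h
  simpa only [mul_sum, ← mul_assoc, one_div] using h

theorem sub_eq_of_isQ (hQ : M.IsQ π Q) (hQ' : M.IsQ π' Q') (s : S) (a : A) :
    Q s a - Q' s a = M.disc * ∑ s', M.P s a s' * (vOf π Q s' - vOf π' Q' s') := by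
  rw [hQ s a, hQ' s a]
  simp only [bellman, vOf, mul_sub, sum_sub_distrib]
  ring

theorem vOf_sub_vOf_of_isQ (hπ : IsPolicy π) (hQ : M.IsQ π Q) (hQ' : M.IsQ π' Q') (s : S) :
    vOf π Q s - vOf π' Q' s =
      ∑ a, π s a * (Q' s a - vOf π' Q' s) +
        M.disc * ∑ a, π s a * ∑ s', M.P s a s' * (vOf π Q s' - vOf π' Q' s') := by
  have hadv : ∑ a, π s a * (Q' s a - vOf π' Q' s) = ∑ a, π s a * Q' s a - vOf π' Q' s := by
    simp only [mul_sub, sum_sub_distrib, ← sum_mul, hπ.2 s, one_mul]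
  have hgap : ∑ a, π s a * Q s a - ∑ a, π s a * Q' s a =
      M.disc * ∑ a, π s a * ∑ s', M.P s a s' * (vOf π Q s' - vOf π' Q' s') := by
    rw [← sum_sub_distrib, mul_sum]
    refine sum_congr rfl fun a _ => ?_
    rw [← mul_sub, M.sub_eq_of_isQ hQ hQ' s a]
    ring
  rw [hadv, ← hgap, vOf]
  ring

theorem sum_stateDist_mul_vOf_sub_vOf_of_isQ (hπ : IsPolicy π) (hQ : M.IsQ π Q)
    (hQ' : M.IsQ π' Q') (t : ℕ) :
    ∑ s, M.stateDist π t s * (vOf π Q s - vOf π' Q' s) =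
      ∑ s, M.stateDist π t s * ∑ a, π s a * (Q' s a - vOf π' Q' s) +
        M.disc * ∑ s, M.stateDist π (t + 1) s * (vOf π Q s - vOf π' Q' s) := by
  rw [sum_stateDist_succ_mul, mul_sum, ← sum_add_distrib]
  refine sum_congr rfl fun s _ => ?_
  rw [M.vOf_sub_vOf_of_isQ hπ hQ hQ' s]
  ring

end FinMDP

theorem stmt0_general (M : FinMDP S A) (π π' Q Q' : S → A → ℝ)
    (hπ : IsPolicy π)
    (hQ : M.IsQ π Q) (hQ' : M.IsQ π' Q') :
    M.scalarV π Q - M.scalarV π' Q' =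
      (1 / (1 - M.disc)) * ∑ s, ∑ a, M.occ π s a * (Q' s a - vOf π' Q' s) := by
  have hgap := hasSum_pow_mul_of_eq_add_mul_succ M.disc_pos.le M.disc_lt_one
    (M.abs_sum_stateDist_mul_le hπ _) (M.sum_stateDist_mul_vOf_sub_vOf_of_isQ hπ hQ hQ')
  have hscalar : M.scalarV π Q - M.scalarV π' Q' =
      ∑ s, M.stateDist π 0 s * (vOf π Q s - vOf π' Q' s) := by
    simp only [FinMDP.scalarV, FinMDP.stateDist, mul_sub, sum_sub_distrib]
  rw [hscalar]
  exact hgap.unique (M.hasSum_disc_pow_mul_sum_stateDist hπ _)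

/-- Performance difference lemma. -/
theorem stmt0 (M : FinMDP S A) (π π' Q Q' : S → A → ℝ)
    (hπ : IsPolicy π) (hπ' : IsPolicy π')
    (hQ : M.IsQ π Q) (hQ' : M.IsQ π' Q') :
    M.scalarV π Q - M.scalarV π' Q' =
      (1 / (1 - M.disc)) * ∑ s, ∑ a, M.occ π s a * (Q' s a - vOf π' Q' s) :=
  stmt0_general M π π' Q Q' hπ hQ hQ'
end

section
/- Exponential weights regret bound: Let A be a finite nonempty set, γ ∈ (0,1), T ≥ 1, and 0 < η ≤ (1−γ)/2. Let g^1, …, g^T : A → ℝ satisfy |g^t(a)| ≤ 1/(1−γ) for all t and a. Let p^1 be the uniform distribution on A and define p^{t+1}(a) = p^t(a)·exp(η·(g^t(a) − E_{a'∼p^t}[g^t(a')])) / Σ_{b} p^t(b)·exp(η·(g^t(b) − E_{a'∼p^t}[g^t(a')])). Then for any probability distribution q on A, Σ_{t=1}^T (E_{a∼q}[g^t(a)] − E_{a∼p^t}[g^t(a)]) ≤ log(|A|)/η + η·T/(1−γ)². -/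
/-! With `L t a = ∑_{s ≤ t} (g s a - E_{p s}[g s])`, the weights `p (t + 1)` are the softmax of
`η • L t`, so the potential `Φ t = log ∑_a exp (η L t a)` starts at `log |A|` and grows in round
`t + 1` by `log E_{p (t+1)}[exp (η (g - E g))] ≤ η² / (1 - γ)²`, using `exp x ≤ 1 + x + x²` for
`|x| ≤ 1`. By Jensen, `Φ T ≥ η E_q[L T]`, which is `η` times the regret against `q`. -/

open Finset

variable {S A : Type*} [Fintype S] [Fintype A] [Nonempty S] [Nonempty A]

open Real

section Softmax

variable {α : Type*} [Fintype α]

noncomputable def softmax (v : α → ℝ) (a : α) : ℝ := exp (v a) / ∑ b, exp (v b)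

lemma sum_exp_pos [Nonempty α] (v : α → ℝ) : 0 < ∑ b, exp (v b) :=
  sum_pos (fun b _ => exp_pos (v b)) univ_nonempty

lemma softmax_pos (v : α → ℝ) (a : α) : 0 < softmax v a :=
  have : Nonempty α := ⟨a⟩
  div_pos (exp_pos (v a)) (sum_exp_pos v)

lemma sum_softmax [Nonempty α] (v : α → ℝ) : ∑ a, softmax v a = 1 := by
  simp only [softmax, ← sum_div, div_self (sum_exp_pos v).ne']

lemma softmax_zero : softmax (fun _ : α => 0) = fun _ => 1 / (Fintype.card α : ℝ) := by
  ext a; simp [softmax]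

lemma sum_exp_add [Nonempty α] (v w : α → ℝ) :
    ∑ a, exp (v a + w a) = (∑ b, exp (v b)) * ∑ a, softmax v a * exp (w a) := by
  simp only [mul_sum, softmax, exp_add]
  refine sum_congr rfl fun a _ => ?_
  field_simp [(sum_exp_pos v).ne']

lemma softmax_mul_exp_div [Nonempty α] (v w : α → ℝ) (a : α) :
    softmax v a * exp (w a) / ∑ b, softmax v b * exp (w b) = softmax (v + w) a := by
  change exp (v a) / _ * exp (w a) / _ = exp (v a + w a) / ∑ b, exp (v b + w b)
  rw [sum_exp_add, exp_add, div_mul_eq_mul_div, div_div]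

lemma sum_mul_le_log_sum_exp {q : α → ℝ} (hq0 : ∀ a, 0 ≤ q a) (hq1 : ∑ a, q a = 1)
    (v : α → ℝ) : ∑ a, q a * v a ≤ log (∑ a, exp (v a)) := by
  have hJensen : exp (∑ a, q a * v a) ≤ ∑ a, q a * exp (v a) := by
    simpa only [smul_eq_mul] using
      convexOn_exp.map_sum_le (fun a _ => hq0 a) hq1 (fun a _ => Set.mem_univ (v a))
  have hq_le_one : ∀ a, q a ≤ 1 := fun a =>
    hq1 ▸ single_le_sum (fun b _ => hq0 b) (mem_univ a)
  have hle : ∑ a, q a * exp (v a) ≤ ∑ a, exp (v a) :=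
    sum_le_sum fun a _ => mul_le_of_le_one_left (exp_pos _).le (hq_le_one a)
  simpa only [log_exp] using log_le_log (exp_pos _) (hJensen.trans hle)

end Softmax

section CenteredMoments

variable {α : Type*} [Fintype α] {p f : α → ℝ}

lemma sum_mul_sub_mean (hp1 : ∑ a, p a = 1) :
    ∑ a, p a * (f a - ∑ b, p b * f b) = 0 := by
  simp only [mul_sub, sum_sub_distrib, ← sum_mul, hp1, one_mul, sub_self]

lemma sum_mul_sub_mean_sq (hp1 : ∑ a, p a = 1) :
    ∑ a, p a * (f a - ∑ b, p b * f b) ^ 2 = ∑ a, p a * f a ^ 2 - (∑ b, p b * f b) ^ 2 := by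
  set m := ∑ b, p b * f b
  have hexpand : ∀ a, p a * (f a - m) ^ 2 = p a * f a ^ 2 - 2 * m * (p a * f a) + m ^ 2 * p a :=
    fun a => by ring
  simp only [hexpand, sum_add_distrib, sum_sub_distrib, ← mul_sum, hp1]
  ring

lemma abs_sum_mul_le {B : ℝ} (hp0 : ∀ a, 0 ≤ p a) (hp1 : ∑ a, p a = 1)
    (hf : ∀ a, |f a| ≤ B) : |∑ a, p a * f a| ≤ B :=
  calc |∑ a, p a * f a| ≤ ∑ a, p a * |f a| := by
        simpa only [abs_mul, abs_of_nonneg (hp0 _)] using abs_sum_le_sum_abs (fun a => p a * f a) univ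
    _ ≤ ∑ a, p a * B := sum_le_sum fun a _ => mul_le_mul_of_nonneg_left (hf a) (hp0 a)
    _ = B := by rw [← sum_mul, hp1, one_mul]

lemma sum_mul_sq_le {B : ℝ} (hp0 : ∀ a, 0 ≤ p a) (hp1 : ∑ a, p a = 1)
    (hf : ∀ a, |f a| ≤ B) : ∑ a, p a * f a ^ 2 ≤ B ^ 2 :=
  calc ∑ a, p a * f a ^ 2 ≤ ∑ a, p a * B ^ 2 := sum_le_sum fun a _ =>
        mul_le_mul_of_nonneg_left (sq_le_sq' (abs_le.1 (hf a)).1 (abs_le.1 (hf a)).2) (hp0 a)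
    _ = B ^ 2 := by rw [← sum_mul, hp1, one_mul]

/-- Uses `exp x ≤ 1 + x + x ^ 2` on `|x| ≤ 1`: the linear term vanishes after centering and the
quadratic one is the variance. -/
lemma sum_mul_exp_sub_mean_le {B η : ℝ} (hp0 : ∀ a, 0 ≤ p a) (hp1 : ∑ a, p a = 1)
    (hf : ∀ a, |f a| ≤ B) (hηB : 2 * |η| * B ≤ 1) :
    ∑ a, p a * exp (η * (f a - ∑ b, p b * f b)) ≤ 1 + η ^ 2 * B ^ 2 := by
  set m := ∑ b, p b * f b
  have hsmall : ∀ a, |η * (f a - m)| ≤ 1 := fun a => by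
    have := abs_sub (f a) m
    have := abs_sum_mul_le hp0 hp1 hf
    rw [abs_mul]
    nlinarith [abs_nonneg η, hf a]
  have hexp : ∀ a, exp (η * (f a - m)) ≤ 1 + η * (f a - m) + (η * (f a - m)) ^ 2 := fun a => by
    have := abs_le.1 (abs_exp_sub_one_sub_id_le (hsmall a))
    linarith
  calc ∑ a, p a * exp (η * (f a - m))
      ≤ ∑ a, p a * (1 + η * (f a - m) + (η * (f a - m)) ^ 2) :=
        sum_le_sum fun a _ => mul_le_mul_of_nonneg_left (hexp a) (hp0 a)
    _ = ∑ a, (p a + η * (p a * (f a - m)) + η ^ 2 * (p a * (f a - m) ^ 2)) :=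
        sum_congr rfl fun a _ => by ring
    _ = 1 + η * ∑ a, p a * (f a - m) + η ^ 2 * ∑ a, p a * (f a - m) ^ 2 := by
        simp only [sum_add_distrib, ← mul_sum, hp1]
    _ = 1 + η ^ 2 * (∑ a, p a * f a ^ 2 - m ^ 2) := by
        rw [sum_mul_sub_mean hp1, sum_mul_sub_mean_sq hp1, mul_zero, add_zero]
    _ ≤ 1 + η ^ 2 * B ^ 2 := by
        gcongr
        linarith [sum_mul_sq_le hp0 hp1 hf, sq_nonneg m]

end CenteredMoments

section ExponentialWeights

variable {α : Type*} [Fintype α] {p g : ℕ → α → ℝ} {η : ℝ} {T : ℕ}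

def excessGain (p g : ℕ → α → ℝ) (t : ℕ) (a : α) : ℝ := g t a - ∑ b, p t b * g t b

def cumExcessGain (p g : ℕ → α → ℝ) (t : ℕ) (a : α) : ℝ :=
  ∑ s ∈ Icc 1 t, excessGain p g s a

lemma cumExcessGain_zero (a : α) : cumExcessGain p g 0 a = 0 := by
  simp [cumExcessGain]

lemma cumExcessGain_succ (t : ℕ) (a : α) :
    cumExcessGain p g (t + 1) a = cumExcessGain p g t a + excessGain p g (t + 1) a :=
  sum_Icc_succ_top (Nat.le_add_left 1 t) _

lemma sum_mul_cumExcessGain {q : α → ℝ} (hq1 : ∑ a, q a = 1) (t : ℕ) :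
    ∑ a, q a * cumExcessGain p g t a =
      ∑ s ∈ Icc 1 t, ((∑ a, q a * g s a) - ∑ a, p s a * g s a) := by
  simp only [cumExcessGain, mul_sum]
  rw [sum_comm]
  refine sum_congr rfl fun s _ => ?_
  simp only [excessGain, mul_sub, sum_sub_distrib, ← sum_mul, hq1, one_mul]

lemma eq_softmax_cumExcessGain [Nonempty α] (hp1 : ∀ a, p 1 a = 1 / Fintype.card α)
    (hupd : ∀ t, 1 ≤ t → t < T → ∀ a,
      p (t + 1) a =
        p t a * exp (η * excessGain p g t a) / ∑ b, p t b * exp (η * excessGain p g t b)) :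
    ∀ t < T, p (t + 1) = softmax (fun a => η * cumExcessGain p g t a) := by
  intro t
  induction t with
  | zero =>
    intro _
    simp only [cumExcessGain_zero, mul_zero, softmax_zero]
    exact funext hp1
  | succ t ih =>
    intro ht
    funext a
    rw [hupd (t + 1) (Nat.le_add_left 1 t) ht a, ih (by omega)]
    simp only [cumExcessGain_succ, mul_add]
    exact softmax_mul_exp_div _ (fun a => η * excessGain p g (t + 1) a) a

lemma log_sum_exp_cumExcessGain_le [Nonempty α] {B : ℝ}
    (hg : ∀ t ∈ Icc 1 T, ∀ a, |g t a| ≤ B) (hηB : 2 * |η| * B ≤ 1)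
    (hsoft : ∀ t < T, p (t + 1) = softmax (fun a => η * cumExcessGain p g t a)) :
    ∀ t ≤ T, log (∑ a, exp (η * cumExcessGain p g t a)) ≤
      log (Fintype.card α) + t * (η ^ 2 * B ^ 2) := by
  intro t
  induction t with
  | zero => intro _; simp [cumExcessGain_zero]
  | succ t ih =>
    intro ht
    set v := fun a => η * cumExcessGain p g t a
    have hstep : ∑ a, softmax v a * exp (η * excessGain p g (t + 1) a) ≤ 1 + η ^ 2 * B ^ 2 := by
      rw [← hsoft t ht]
      exact sum_mul_exp_sub_mean_le (fun a => by rw [hsoft t ht]; exact (softmax_pos _ _).le)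
        (by rw [hsoft t ht]; exact sum_softmax _) (hg (t + 1) (mem_Icc.2 ⟨Nat.le_add_left 1 t, ht⟩)) hηB
    have hpos : 0 < ∑ a, softmax v a * exp (η * excessGain p g (t + 1) a) :=
      sum_pos (fun a _ => mul_pos (softmax_pos v a) (exp_pos _)) univ_nonempty
    calc log (∑ a, exp (η * cumExcessGain p g (t + 1) a))
        = log (∑ a, exp (v a)) + log (∑ a, softmax v a * exp (η * excessGain p g (t + 1) a)) := by
          simp only [cumExcessGain_succ, mul_add]
          rw [sum_exp_add v, log_mul (sum_exp_pos v).ne' hpos.ne']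
      _ ≤ log (Fintype.card α) + t * (η ^ 2 * B ^ 2) + η ^ 2 * B ^ 2 := by
          gcongr
          · exact ih (by omega)
          · linarith [log_le_sub_one_of_pos hpos]
      _ = log (Fintype.card α) + (t + 1 : ℕ) * (η ^ 2 * B ^ 2) := by push_cast; ring

end ExponentialWeights

theorem stmt5_general {α : Type*} [Fintype α] [Nonempty α]
    (γ : ℝ) (hγ1 : γ < 1) (T : ℕ)
    (η : ℝ) (hη0 : 0 < η) (hη : η ≤ (1 - γ) / 2)
    (g : ℕ → α → ℝ) (hg : ∀ t ∈ Finset.Icc 1 T, ∀ a, |g t a| ≤ 1 / (1 - γ))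
    (p : ℕ → α → ℝ)
    (hp1 : ∀ a, p 1 a = 1 / Fintype.card α)
    (hupd : ∀ t, 1 ≤ t → t < T → ∀ a,
      p (t + 1) a =
        p t a * Real.exp (η * (g t a - ∑ a', p t a' * g t a')) /
          ∑ b, p t b * Real.exp (η * (g t b - ∑ a', p t a' * g t a')))
    (q : α → ℝ) (hq0 : ∀ a, 0 ≤ q a) (hq1 : ∑ a, q a = 1) :
    ∑ t ∈ Finset.Icc 1 T, ((∑ a, q a * g t a) - ∑ a, p t a * g t a)
      ≤ Real.log (Fintype.card α) / η + η * T / (1 - γ) ^ 2 := by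
  have hγ : 0 < 1 - γ := sub_pos.2 hγ1
  have hηB : 2 * |η| * (1 / (1 - γ)) ≤ 1 := by
    rw [abs_of_pos hη0, mul_one_div, div_le_one hγ]
    linarith
  have hpotential :=
    log_sum_exp_cumExcessGain_le hg hηB (eq_softmax_cumExcessGain hp1 hupd) T le_rfl
  have hscaled : η * ∑ t ∈ Icc 1 T, ((∑ a, q a * g t a) - ∑ a, p t a * g t a) ≤
      log (Fintype.card α) + T * (η ^ 2 * (1 / (1 - γ)) ^ 2) :=
    calc η * ∑ t ∈ Icc 1 T, ((∑ a, q a * g t a) - ∑ a, p t a * g t a)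
        = ∑ a, q a * (η * cumExcessGain p g T a) := by
          rw [← sum_mul_cumExcessGain hq1, mul_sum]
          exact sum_congr rfl fun a _ => mul_left_comm _ _ _
      _ ≤ log (∑ a, exp (η * cumExcessGain p g T a)) := sum_mul_le_log_sum_exp hq0 hq1 _
      _ ≤ _ := hpotential
  rw [← le_div_iff₀' hη0] at hscaled
  exact hscaled.trans_eq (by field_simp)

/-- Exponential weights regret bound. -/
theorem stmt5 {α : Type*} [Fintype α] [Nonempty α]
    (γ : ℝ) (hγ0 : 0 < γ) (hγ1 : γ < 1) (T : ℕ) (hT : 1 ≤ T)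
    (η : ℝ) (hη0 : 0 < η) (hη : η ≤ (1 - γ) / 2)
    (g : ℕ → α → ℝ) (hg : ∀ t ∈ Finset.Icc 1 T, ∀ a, |g t a| ≤ 1 / (1 - γ))
    (p : ℕ → α → ℝ)
    (hp1 : ∀ a, p 1 a = 1 / Fintype.card α)
    (hupd : ∀ t, 1 ≤ t → t < T → ∀ a,
      p (t + 1) a =
        p t a * Real.exp (η * (g t a - ∑ a', p t a' * g t a')) /
          ∑ b, p t b * Real.exp (η * (g t b - ∑ a', p t a' * g t a')))
    (q : α → ℝ) (hq0 : ∀ a, 0 ≤ q a) (hq1 : ∑ a, q a = 1) :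
    ∑ t ∈ Finset.Icc 1 T, ((∑ a, q a * g t a) - ∑ a, p t a * g t a)
      ≤ Real.log (Fintype.card α) / η + η * T / (1 - γ) ^ 2 :=
  stmt5_general γ hγ1 T η hη0 hη g hg p hp1 hupd q hq0 hq1
end

section
/- Bellman residual of the averaged iterate: Let π be a policy of a finite discounted MDP, ν a probability distribution on S×A, Δ ≥ 0, K ≥ 1, and let f_{m+1}, …, f_{m+K} : S×A → [0, 1/(1−γ)] (with f_m also given in [0, 1/(1−γ)]) satisfy E_{ν}[(f_k − T^π f_{k−1})²] ≤ Δ for all k ∈ {m+2, …, m+K}. Define f̄ = (1/K)·Σ_{k=m+1}^{m+K} f_k. Then E_{(s,a)∼ν}[(f̄(s,a) − (T^π f̄)(s,a))²] ≤ 1/(K·(1−γ)²) + Δ. -/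
open Finset

variable {S A : Type*} [Fintype S] [Fintype A] [Nonempty S] [Nonempty A]

/-
The averaged iterate telescopes: since `T^π` is affine,
`K (f̄ - T^π f̄) = (f_{m+1} - T^π f_{m+K}) + ∑_{k=m+2}^{m+K} (f_k - T^π f_{k-1})`.
By Cauchy–Schwarz the square of this average of `K` terms is at most the average of their
squares. The wrap-around term is bounded by `1/(1-γ)` because `T^π` maps `[0, 1/(1-γ)]`-valued
functions to `[0, 1/(1-γ)]`-valued ones, and each of the other `K - 1` terms has
`ν`-mean square at most `Δ`.
-/

theorem sq_add_sum_div_le {ι α : Type*} [Field α] [LinearOrder α] [IsStrictOrderedRing α]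
    (t : Finset ι) (a : α) (b : ι → α) :
    ((a + ∑ i ∈ t, b i) / (#t + 1)) ^ 2 ≤ (a ^ 2 + ∑ i ∈ t, b i ^ 2) / (#t + 1) := by
  simpa [card_insertNone] using
    sum_div_card_sq_le_sum_sq_div_card (s := insertNone t) (f := fun i => i.elim a b)

theorem sum_Icc_sub_sum_Icc_eq_add_sum {M : Type*} [AddCommGroup M] (x y : ℕ → M)
    (m : ℕ) {K : ℕ} (hK : 1 ≤ K) :
    ∑ k ∈ Icc (m + 1) (m + K), x k - ∑ k ∈ Icc (m + 1) (m + K), y k =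
      (x (m + 1) - y (m + K)) + ∑ k ∈ Icc (m + 2) (m + K), (x k - y (k - 1)) := by
  induction K, hK using Nat.le_induction with
  | base => simp
  | succ K hK ih =>
    rw [← add_assoc, sum_Icc_succ_top (by omega), sum_Icc_succ_top (by omega),
      sum_Icc_succ_top (by omega), add_sub_add_comm, ih, Nat.add_sub_cancel]
    abel

theorem sum_sum_mul_add_sum_div {α β ι : Type*} [Fintype α] [Fintype β] (ν u : α → β → ℝ)
    (t : Finset ι) (v : ι → α → β → ℝ) (c : ℝ) :
    ∑ x, ∑ y, ν x y * ((u x y + ∑ k ∈ t, v k x y) / c) =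
      (∑ x, ∑ y, ν x y * u x y + ∑ k ∈ t, ∑ x, ∑ y, ν x y * v k x y) / c := by
  simp only [mul_div_assoc', ← sum_div, mul_add, sum_add_distrib, mul_sum]
  congr 2
  exact (sum_comm.trans (sum_congr rfl fun _ _ => sum_comm)).symm

namespace FinMDP

omit [Nonempty S] [Nonempty A] in
theorem bellman_mem_Icc (M : FinMDP S A) {π : S → A → ℝ} (hπ : IsPolicy π)
    {g : S → A → ℝ} (hg : ∀ s a, g s a ∈ Set.Icc 0 (1 / (1 - M.disc))) (s : S) (a : A) :
    M.bellman π g s a ∈ Set.Icc 0 (1 / (1 - M.disc)) := by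
  have hconv : Convex ℝ (Set.Icc (0 : ℝ) (1 / (1 - M.disc))) := convex_Icc _ _
  have hV : ∀ s', ∑ a', π s' a' * g s' a' ∈ Set.Icc 0 (1 / (1 - M.disc)) := fun s' =>
    hconv.sum_mem (fun a' _ => hπ.1 s' a') (hπ.2 s') fun a' _ => hg s' a'
  obtain ⟨hPV0, hPV1⟩ := hconv.sum_mem (fun s' _ => M.P_nonneg s a s') (M.P_sum s a)
    fun s' _ => hV s'
  have hγ0 := M.disc_pos
  have hγ1 : 0 < 1 - M.disc := sub_pos.2 M.disc_lt_one
  refine ⟨add_nonneg (M.r_nonneg s a) (mul_nonneg hγ0.le hPV0), ?_⟩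
  calc M.bellman π g s a ≤ 1 + M.disc * (1 / (1 - M.disc)) := by
        unfold bellman
        gcongr
        · exact M.r_le_one s a
        · exact hPV1
    _ = 1 / (1 - M.disc) := by field_simp; ring

omit [Nonempty S] [Nonempty A] in
theorem sq_sub_bellman_le (M : FinMDP S A) {π : S → A → ℝ} (hπ : IsPolicy π)
    {f g : S → A → ℝ} (hf : ∀ s a, f s a ∈ Set.Icc 0 (1 / (1 - M.disc)))
    (hg : ∀ s a, g s a ∈ Set.Icc 0 (1 / (1 - M.disc))) (s : S) (a : A) :
    (f s a - M.bellman π g s a) ^ 2 ≤ (1 / (1 - M.disc)) ^ 2 := by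
  have hx := hf s a
  have hy := M.bellman_mem_Icc hπ hg s a
  exact sq_le_sq' (by linarith [hx.1, hy.2]) (by linarith [hx.2, hy.1])

omit [Nonempty S] [Nonempty A] in
theorem bellman_sum_mul (M : FinMDP S A) (π : S → A → ℝ) {ι : Type*} (t : Finset ι)
    (w : ι → ℝ) (hw : ∑ i ∈ t, w i = 1) (F : ι → S → A → ℝ) (s : S) (a : A) :
    M.bellman π (fun s a => ∑ i ∈ t, w i * F i s a) s a =
      ∑ i ∈ t, w i * M.bellman π (F i) s a := by
  simp only [bellman, mul_add, sum_add_distrib, ← sum_mul, hw, one_mul, mul_sum]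
  congr 1
  rw [sum_comm (s := t)]
  refine sum_congr rfl fun s' _ => ?_
  rw [sum_comm (s := t)]
  refine sum_congr rfl fun a' _ => sum_congr rfl fun i _ => ?_
  ring

omit [Nonempty S] [Nonempty A] in
theorem average_sub_bellman_average (M : FinMDP S A) (π : S → A → ℝ)
    (f : ℕ → S → A → ℝ) (m : ℕ) {K : ℕ} (hK : 1 ≤ K) (s : S) (a : A) :
    (1 / (K : ℝ)) * ∑ k ∈ Icc (m + 1) (m + K), f k s a
        - M.bellman π (fun s a => (1 / (K : ℝ)) * ∑ k ∈ Icc (m + 1) (m + K), f k s a) s a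
      = ((f (m + 1) s a - M.bellman π (f (m + K)) s a)
          + ∑ k ∈ Icc (m + 2) (m + K), (f k s a - M.bellman π (f (k - 1)) s a)) / K := by
  have hw : ∑ _k ∈ Icc (m + 1) (m + K), 1 / (K : ℝ) = 1 := by
    have : (K : ℝ) ≠ 0 := by positivity
    simp [this]
  simp only [mul_sum]
  rw [M.bellman_sum_mul π _ _ hw, ← mul_sum, ← mul_sum, ← mul_sub,
    sum_Icc_sub_sum_Icc_eq_add_sum _ _ m hK, one_div_mul_eq_div]

omit [Nonempty S] [Nonempty A] in
theorem sq_average_sub_bellman_average_le (M : FinMDP S A) (π : S → A → ℝ)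
    (f : ℕ → S → A → ℝ) (m : ℕ) {K : ℕ} (hK : 1 ≤ K) (s : S) (a : A) :
    ((1 / (K : ℝ)) * ∑ k ∈ Icc (m + 1) (m + K), f k s a
        - M.bellman π (fun s a => (1 / (K : ℝ)) * ∑ k ∈ Icc (m + 1) (m + K), f k s a) s a) ^ 2
      ≤ ((f (m + 1) s a - M.bellman π (f (m + K)) s a) ^ 2
          + ∑ k ∈ Icc (m + 2) (m + K), (f k s a - M.bellman π (f (k - 1)) s a) ^ 2) / K := by
  have hcard : (#(Icc (m + 2) (m + K)) : ℝ) + 1 = K := by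
    rw [Nat.card_Icc]
    norm_cast
    omega
  rw [M.average_sub_bellman_average π f m hK, ← hcard]
  exact sq_add_sum_div_le _ _ _

end FinMDP

/-- Bellman residual of the averaged iterate. -/
theorem stmt14 (M : FinMDP S A) (π : S → A → ℝ) (hπ : IsPolicy π)
    (ν : S → A → ℝ) (hν0 : ∀ s a, 0 ≤ ν s a) (hν1 : ∑ s, ∑ a, ν s a = 1)
    (Δ : ℝ) (hΔ : 0 ≤ Δ) (m K : ℕ) (hK : 1 ≤ K)
    (f : ℕ → S → A → ℝ)
    (hmem : ∀ k, m ≤ k → k ≤ m + K → ∀ s a, f k s a ∈ Set.Icc 0 (1 / (1 - M.disc)))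
    (hres : ∀ k, m + 2 ≤ k → k ≤ m + K →
      ∑ s, ∑ a, ν s a * (f k s a - M.bellman π (f (k - 1)) s a) ^ 2 ≤ Δ)
    (fbar : S → A → ℝ)
    (hfbar : ∀ s a, fbar s a = (1 / (K : ℝ)) * ∑ k ∈ Finset.Icc (m + 1) (m + K), f k s a) :
    ∑ s, ∑ a, ν s a * (fbar s a - M.bellman π fbar s a) ^ 2
      ≤ 1 / (K * (1 - M.disc) ^ 2) + Δ := by
  obtain rfl : fbar = fun s a => (1 / (K : ℝ)) * ∑ k ∈ Icc (m + 1) (m + K), f k s a :=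
    funext fun s => funext (hfbar s)
  set first := fun s a => (f (m + 1) s a - M.bellman π (f (m + K)) s a) ^ 2
  set res := fun k s a => (f k s a - M.bellman π (f (k - 1)) s a) ^ 2
  set t := Icc (m + 2) (m + K)
  have hfirst : ∑ s, ∑ a, ν s a * first s a ≤ (1 / (1 - M.disc)) ^ 2 := by
    calc _ ≤ ∑ s, ∑ a, ν s a * (1 / (1 - M.disc)) ^ 2 :=
          sum_le_sum fun s _ => sum_le_sum fun a _ => mul_le_mul_of_nonneg_left
            (M.sq_sub_bellman_le hπ (hmem _ (by omega) (by omega)) (hmem _ (by omega) le_rfl) s a)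
            (hν0 s a)
      _ = (1 / (1 - M.disc)) ^ 2 := by simp only [← sum_mul, hν1, one_mul]
  have hrest : ∑ k ∈ t, ∑ s, ∑ a, ν s a * res k s a ≤ Δ * K := by
    calc _ ≤ #t • Δ :=
          sum_le_card_nsmul _ _ _ fun k hk => hres k (mem_Icc.1 hk).1 (mem_Icc.1 hk).2
      _ ≤ Δ * K := by
        rw [nsmul_eq_mul, mul_comm]
        gcongr
        simp only [t, Nat.card_Icc]
        omega
  have hγ : 1 - M.disc ≠ 0 := (sub_pos.2 M.disc_lt_one).ne'
  have hK0 : (K : ℝ) ≠ 0 := by positivity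
  calc _ ≤ ∑ s, ∑ a, ν s a * ((first s a + ∑ k ∈ t, res k s a) / K) := by
        gcongr with s _ a _
        · exact hν0 s a
        · exact M.sq_average_sub_bellman_average_le π f m hK s a
    _ = (∑ s, ∑ a, ν s a * first s a + ∑ k ∈ t, ∑ s, ∑ a, ν s a * res k s a) / K :=
        sum_sum_mul_add_sum_div ν first t res K
    _ ≤ ((1 / (1 - M.disc)) ^ 2 + Δ * K) / K := by gcongr
    _ = 1 / (K * (1 - M.disc) ^ 2) + Δ := by field_simp
end
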